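/- arXiv:2305.01745 — 4 statements merged into one kernel-verified Lean document; each statement's English description precedes it below -/
import Mathlib

section
/- Let r ∈ ℕ₀ and let λ ∈ (-1,1). Set r̃ := 2⌊r/2⌋ (so r̃ = r if r is even and r̃ = r-1 if r is odd). Then there exists a function f ∈ C^r with f ≡ 0 on [-1, λ] such that there is NO function g ∈ C^{r+1} satisfying both (a) g^(i)(λ) = f^(i)(λ) for all 0 ≤ i ≤ r̃, and (b) g(x) ≥ f(x) for all x in (λ-ε, λ+ε) for some ε > 0. That is, onesided approximation by C^{r+1}-smooth functions with Hermite interpolation of order r̃ at an interior point is impossible in general. -/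
/-!
The witness is the truncated power `f x = (x - λ)₊^{r+1/2}`: it is `C^r`, vanishes left of `λ`,
and its derivatives of order `≤ r` vanish at `λ`. Since `r̃ ≥ r - 1`, an admissible `g ∈ C^{r+1}`
has vanishing derivatives of order `< r` at `λ`, so by Taylor
`g x = A (x - λ)^r + O(|x - λ|^{r+1})`. For even `r` interpolation also gives `A = 0`; for odd `r`,
`(x - λ)^r < 0` left of `λ` and `g ≥ f = 0` there force `A ≤ 0`. Either way
`g (λ + t) ≤ O(t^{r+1})`, which cannot dominate `f (λ + t) = t^{r+1/2}`.
-/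

open Set Filter Topology
open scoped Nat

lemma continuous_max_zero_rpow {q : ℝ} (hq : 0 < q) : Continuous fun x : ℝ => max x 0 ^ q :=
  (continuous_id.max continuous_const).rpow_const fun _ => Or.inr hq.le

lemma hasDerivAt_max_zero_rpow {q : ℝ} (hq : 1 < q) (x : ℝ) :
    HasDerivAt (fun y : ℝ => max y 0 ^ q) (q * max x 0 ^ (q - 1)) x := by
  refine hasDerivAt_of_hasDerivAt_of_ne' (x := 0) (fun y hy => ?_)
    (continuous_max_zero_rpow (by linarith)).continuousAt
    ((continuous_max_zero_rpow (by linarith)).continuousAt.const_mul q) x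
  rcases hy.lt_or_gt with hy | hy
  · have hzero : (fun y : ℝ => max y 0 ^ q) =ᶠ[𝓝 y] fun _ => 0 := by
      filter_upwards [Iio_mem_nhds hy] with z hz
      rw [max_eq_right hz.le, Real.zero_rpow (by linarith)]
    rw [max_eq_right hy.le, Real.zero_rpow (by linarith), mul_zero]
    exact (hasDerivAt_const y 0).congr_of_eventuallyEq hzero
  · have hpow : (fun y : ℝ => max y 0 ^ q) =ᶠ[𝓝 y] fun y => y ^ q := by
      filter_upwards [Ioi_mem_nhds hy] with z hz
      rw [max_eq_left hz.le]
    rw [max_eq_left hy.le]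
    exact (Real.hasDerivAt_rpow_const (Or.inl hy.ne')).congr_of_eventuallyEq hpow

lemma contDiff_max_zero_rpow {n : ℕ} {q : ℝ} (h : n < q) :
    ContDiff ℝ n fun x : ℝ => max x 0 ^ q := by
  induction n generalizing q with
  | zero => exact contDiff_zero.mpr (continuous_max_zero_rpow (by exact_mod_cast h))
  | succ n ih =>
    push_cast at h
    have hq : 1 < q := by linarith [(n.cast_nonneg : (0 : ℝ) ≤ n)]
    have hderiv : deriv (fun x : ℝ => max x 0 ^ q) = fun x => q * max x 0 ^ (q - 1) :=
      funext fun x => (hasDerivAt_max_zero_rpow hq x).deriv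
    rw [Nat.cast_succ, contDiff_succ_iff_deriv, hderiv]
    exact ⟨fun x => (hasDerivAt_max_zero_rpow hq x).differentiableAt, by simp,
      contDiff_const.mul (ih (by linarith))⟩

lemma iteratedDeriv_eq_zero_of_forall_le {F : Type*} [NormedAddCommGroup F] [NormedSpace ℝ F]
    {f : ℝ → F} {i : ℕ} {a : ℝ} (hf : ContDiff ℝ i f) (h0 : ∀ x ≤ a, f x = 0) :
    iteratedDeriv i f a = 0 := by
  have hIio : EqOn (iteratedDeriv i f) (fun _ => 0) (Iio a) := fun x hx => by
    rw [EqOn.iteratedDeriv_of_isOpen (g := 0) (fun y hy => h0 y (le_of_lt hy)) isOpen_Iio i hx,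
      iteratedDeriv_const_zero]
  refine hIio.of_subset_closure (hf.continuous_iteratedDeriv' i).continuousOn continuousOn_const
    Iio_subset_Iic_self (by rw [closure_Iio]) (mem_Iic.2 le_rfl)

noncomputable def truncPow (a q x : ℝ) : ℝ := max (x - a) 0 ^ q

section truncPow

variable {a q : ℝ}

lemma truncPow_of_le (hq : q ≠ 0) {x : ℝ} (hx : x ≤ a) : truncPow a q x = 0 := by
  rw [truncPow, max_eq_right (sub_nonpos.2 hx), Real.zero_rpow hq]

lemma truncPow_add {t : ℝ} (ht : 0 ≤ t) : truncPow a q (a + t) = t ^ q := by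
  rw [truncPow, add_sub_cancel_left, max_eq_left ht]

lemma contDiff_truncPow {n : ℕ} (h : n < q) : ContDiff ℝ n (truncPow a q) :=
  (contDiff_max_zero_rpow h).comp (contDiff_id.sub contDiff_const)

lemma iteratedDerivWithin_truncPow_self {s : Set ℝ} (hs : UniqueDiffOn ℝ s) (ha : a ∈ s) {i : ℕ}
    (h : i < q) : iteratedDerivWithin i (truncPow a q) s a = 0 := by
  have hi : ContDiff ℝ i (truncPow a q) := contDiff_truncPow h
  rw [iteratedDerivWithin_eq_iteratedDeriv hs hi.contDiffAt ha]
  exact iteratedDeriv_eq_zero_of_forall_le hi fun x hx =>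
    truncPow_of_le (by linarith [(i.cast_nonneg : (0 : ℝ) ≤ i)]) hx

end truncPow

lemma abs_sub_le_mul_abs_sub_pow_succ {s : Set ℝ} (hs : Convex ℝ s) {u u' : ℝ → ℝ} {a x C : ℝ}
    {m : ℕ} (hu : ∀ y ∈ s, HasDerivWithinAt u (u' y) s y) (hC : 0 ≤ C)
    (hu' : ∀ y ∈ s, |u' y| ≤ C * |y - a| ^ m) (ha : a ∈ s) (hx : x ∈ s) :
    |u x - u a| ≤ C * |x - a| ^ (m + 1) := by
  have hsub : uIcc a x ⊆ s := hs.ordConnected.uIcc_subset ha hx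
  have hbound : ∀ y ∈ uIcc a x, ‖u' y‖ ≤ C * |x - a| ^ m := fun y hy =>
    (hu' y (hsub hy)).trans <| mul_le_mul_of_nonneg_left
      (pow_le_pow_left₀ (abs_nonneg _) (abs_sub_left_of_mem_uIcc hy) m) hC
  calc |u x - u a| ≤ C * |x - a| ^ m * ‖x - a‖ :=
        (convex_uIcc a x).norm_image_sub_le_of_norm_hasDerivWithin_le
          (fun y hy => (hu y (hsub hy)).mono hsub) hbound left_mem_uIcc right_mem_uIcc
    _ = C * |x - a| ^ (m + 1) := by rw [Real.norm_eq_abs, pow_succ, mul_assoc]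

-- Taylor expansion around an arbitrary point of `s`; `taylor_mean_remainder_bound` only expands
-- at the left endpoint of an interval.
theorem exists_abs_sub_taylor_monomial_le {s : Set ℝ} (hs : UniqueDiffOn ℝ s)
    (hconv : Convex ℝ s) (hcomp : IsCompact s) {a : ℝ} (ha : a ∈ s) (k : ℕ) {h : ℝ → ℝ}
    (hh : ContDiffOn ℝ (k + 1 : ℕ) h s) (hz : ∀ i < k, iteratedDerivWithin i h s a = 0) :
    ∃ C, 0 ≤ C ∧ ∀ x ∈ s,
      |h x - iteratedDerivWithin k h s a / k ! * (x - a) ^ k| ≤ C * |x - a| ^ (k + 1) := by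
  induction k generalizing h with
  | zero =>
    obtain ⟨C, hC⟩ := hcomp.exists_bound_of_continuousOn
      (hh.continuousOn_derivWithin hs (by norm_num))
    refine ⟨max C 0, le_max_right _ _, fun x hx => ?_⟩
    have hdiff : DifferentiableOn ℝ h s := hh.differentiableOn (by norm_num)
    simpa using abs_sub_le_mul_abs_sub_pow_succ (m := 0) hconv
      (fun y hy => (hdiff y hy).hasDerivWithinAt) (le_max_right _ _)
      (fun y hy => by
        rw [pow_zero, mul_one, ← Real.norm_eq_abs]; exact (hC y hy).trans (le_max_left _ _))
      ha hx
  | succ k ih =>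
    set A := iteratedDerivWithin (k + 1) h s a
    have hh' : ContDiffOn ℝ (k + 1 : ℕ) (derivWithin h s) s :=
      hh.derivWithin hs (by push_cast; rfl)
    obtain ⟨C, hC0, hC⟩ := ih hh' fun i hi => by
      rw [← iteratedDerivWithin_succ']; exact hz (i + 1) (by omega)
    rw [← iteratedDerivWithin_succ'] at hC
    have hdiff : DifferentiableOn ℝ h s := hh.differentiableOn (by simp)
    have hu : ∀ y ∈ s, HasDerivWithinAt (fun x => h x - A / (k + 1)! * (x - a) ^ (k + 1))
        (derivWithin h s y - A / k ! * (y - a) ^ k) s y := fun y hy => by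
      have hmonomial : HasDerivAt (fun x => A / (k + 1)! * (x - a) ^ (k + 1))
          (A / k ! * (y - a) ^ k) y := by
        refine ((((hasDerivAt_id' y).sub_const a).pow (k + 1)).const_mul _).congr_deriv ?_
        push_cast [Nat.factorial_succ, Nat.add_sub_cancel]
        field_simp
      exact (hdiff y hy).hasDerivWithinAt.sub hmonomial.hasDerivWithinAt
    have ha0 : h a = 0 := by simpa using hz 0 (by omega)
    refine ⟨C, hC0, fun x hx => ?_⟩
    simpa [ha0] using abs_sub_le_mul_abs_sub_pow_succ hconv hu hC0 hC ha hx

lemma nonpos_of_eventually_mul_rpow_le {p δ b C : ℝ} (hδ : 0 < δ)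
    (h : ∀ᶠ t in 𝓝[>] (0 : ℝ), b * t ^ p ≤ C * t ^ (p + δ)) : b ≤ 0 := by
  have hlim : Tendsto (fun t : ℝ => C * t ^ δ) (𝓝[>] 0) (𝓝 0) := by
    have := ((Real.continuousAt_rpow_const 0 δ (Or.inr hδ.le)).const_mul C).tendsto
    simpa [Real.zero_rpow hδ.ne'] using this.mono_left nhdsWithin_le_nhds
  refine ge_of_tendsto hlim ?_
  filter_upwards [h, self_mem_nhdsWithin] with t ht (htpos : 0 < t)
  rw [Real.rpow_add htpos, ← mul_assoc, mul_right_comm] at ht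
  exact le_of_mul_le_mul_right ht (Real.rpow_pos_of_pos htpos p)

lemma nonpos_of_odd_of_eventually_nonneg_left {s : Set ℝ} {g : ℝ → ℝ} {a A C : ℝ} {r : ℕ}
    (hr : Odd r) (hC : ∀ x ∈ s, |g x - A * (x - a) ^ r| ≤ C * |x - a| ^ (r + 1))
    (hg : ∀ᶠ t in 𝓝[>] (0 : ℝ), a - t ∈ s ∧ 0 ≤ g (a - t)) : A ≤ 0 := by
  refine nonpos_of_eventually_mul_rpow_le (p := r) (C := C) one_pos ?_
  filter_upwards [hg, self_mem_nhdsWithin] with t ⟨hts, hgt⟩ (ht : 0 < t)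
  have htaylor := hC _ hts
  rw [show a - t - a = -t by ring, hr.neg_pow, abs_neg, abs_of_pos ht] at htaylor
  rw [Real.rpow_natCast, show (r : ℝ) + 1 = (r + 1 : ℕ) by push_cast; ring, Real.rpow_natCast]
  linarith [(abs_le.1 htaylor).2]

lemma not_eventually_rpow_add_half_le_right {s : Set ℝ} {g : ℝ → ℝ} {a A C : ℝ} {r : ℕ}
    (hA : A ≤ 0) (hC : ∀ x ∈ s, |g x - A * (x - a) ^ r| ≤ C * |x - a| ^ (r + 1)) :
    ¬ ∀ᶠ t in 𝓝[>] (0 : ℝ), a + t ∈ s ∧ t ^ ((r : ℝ) + 1 / 2) ≤ g (a + t) := by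
  intro hg
  refine (nonpos_of_eventually_mul_rpow_le (b := 1) (p := r + 1 / 2) (C := C) one_half_pos
    ?_).not_gt one_pos
  filter_upwards [hg, self_mem_nhdsWithin] with t ⟨hts, hgt⟩ (ht : 0 < t)
  have htaylor := hC _ hts
  rw [add_sub_cancel_left, abs_of_pos ht] at htaylor
  have hmono_nonpos : A * t ^ r ≤ 0 := mul_nonpos_of_nonpos_of_nonneg hA (by positivity)
  rw [one_mul, show (r : ℝ) + 1 / 2 + 1 / 2 = (r + 1 : ℕ) by push_cast; ring, Real.rpow_natCast]
  linarith [(abs_le.1 htaylor).2]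

/-- Local onesided approximation with interpolatory constraints, negative result at an
interior point: for `r ∈ ℕ₀`, `λ ∈ (-1,1)` and `r̃ := 2⌊r/2⌋`, there is `f ∈ C^r[-1,1]`
vanishing on `[-1,λ]` such that no `g ∈ C^{r+1}[-1,1]` satisfies both
`g^{(i)}(λ) = f^{(i)}(λ)` for `0 ≤ i ≤ r̃` and `g ≥ f` on `(λ-ε, λ+ε) ∩ [-1,1]`
for some `ε > 0`. -/
theorem statement5 (r : ℕ) (lam : ℝ) (hlam : lam ∈ Set.Ioo (-1 : ℝ) 1) :
    ∃ f : ℝ → ℝ, ContDiffOn ℝ r f (Set.Icc (-1 : ℝ) 1) ∧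
      (∀ x ∈ Set.Icc (-1 : ℝ) lam, f x = 0) ∧
      ¬ ∃ g : ℝ → ℝ, ContDiffOn ℝ (r + 1 : ℕ) g (Set.Icc (-1 : ℝ) 1) ∧
        (∀ i : ℕ, i ≤ 2 * (r / 2) →
          iteratedDerivWithin i g (Set.Icc (-1 : ℝ) 1) lam
            = iteratedDerivWithin i f (Set.Icc (-1 : ℝ) 1) lam) ∧
        (∃ ε : ℝ, 0 < ε ∧
          ∀ x ∈ Set.Ioo (lam - ε) (lam + ε) ∩ Set.Icc (-1 : ℝ) 1, f x ≤ g x) := by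
  set s := Icc (-1 : ℝ) 1
  have hs : UniqueDiffOn ℝ s := uniqueDiffOn_Icc (by norm_num)
  have hlam_mem : lam ∈ s := Ioo_subset_Icc_self hlam
  have hq : (0 : ℝ) < r + 1 / 2 := by positivity
  have hf_deriv : ∀ i ≤ r, iteratedDerivWithin i (truncPow lam (r + 1 / 2)) s lam = 0 :=
    fun i hi => iteratedDerivWithin_truncPow_self hs hlam_mem
      ((Nat.cast_le.2 hi).trans_lt (by linarith))
  refine ⟨truncPow lam (r + 1 / 2), (contDiff_truncPow (by linarith)).contDiffOn,
    fun x hx => truncPow_of_le hq.ne' hx.2, ?_⟩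
  rintro ⟨g, hg, hinterp, ε, hε, hfg⟩
  obtain ⟨C, -, hC⟩ := exists_abs_sub_taylor_monomial_le hs (convex_Icc _ _) isCompact_Icc
    hlam_mem r hg fun i hi => (hinterp i (by omega)).trans (hf_deriv i hi.le)
  set U := Ioo (lam - ε) (lam + ε) ∩ s
  have hU : U ∈ 𝓝 lam :=
    inter_mem (Ioo_mem_nhds (by linarith) (by linarith)) (Icc_mem_nhds hlam.1 hlam.2)
  have hleft : ∀ᶠ t in 𝓝[>] (0 : ℝ), lam - t ∈ U :=
    (((continuous_sub_left lam).tendsto' 0 lam (sub_zero lam)).mono_left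
      nhdsWithin_le_nhds).eventually hU
  have hright : ∀ᶠ t in 𝓝[>] (0 : ℝ), lam + t ∈ U :=
    (((continuous_const_add lam).tendsto' 0 lam (add_zero lam)).mono_left
      nhdsWithin_le_nhds).eventually hU
  have hA : iteratedDerivWithin r g s lam / r ! ≤ 0 := by
    rcases Nat.even_or_odd r with hr | hr
    · have hr' : r ≤ 2 * (r / 2) := by have := Nat.even_iff.1 hr; omega
      simp [(hinterp r hr').trans (hf_deriv r le_rfl)]
    refine nonpos_of_odd_of_eventually_nonneg_left hr hC ?_
    filter_upwards [hleft, self_mem_nhdsWithin] with t ht (ht0 : 0 < t)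
    exact ⟨ht.2, truncPow_of_le hq.ne' (by linarith : lam - t ≤ lam) ▸ hfg _ ht⟩
  refine not_eventually_rpow_add_half_le_right hA hC ?_
  filter_upwards [hright, self_mem_nhdsWithin] with t ht (ht0 : 0 < t)
  exact ⟨ht.2, truncPow_add ht0.le ▸ hfg _ ht⟩
end

section
/- Let r ∈ ℕ₀ and let λ ∈ {-1, 1} be an endpoint of I. Then there exists a function f ∈ C^r such that there is NO function g ∈ C^{r+1} satisfying both (a) g^(i)(λ) = f^(i)(λ) for all 0 ≤ i ≤ r, and (b) g(x) ≥ f(x) for all x in (λ-ε, λ+ε) ∩ I for some ε > 0. That is, onesided approximation by C^{r+1}-smooth functions with Hermite interpolation of full order r at an endpoint is impossible in general. -/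
/-!
The witness is `f x = (1 - λx)^(r + 1/2)`, which on `I` equals `|x - λ|^(r + 1/2)`: it is `C^r`
and all its derivatives of order `≤ r` vanish at `λ`. A `C^{r+1}` function `g` with the same
derivatives at `λ` is `O(|x - λ|^(r+1))` near `λ` by Taylor's theorem, and such a function cannot
stay above `|x - λ|^(r + 1/2)`.
-/

open Set Filter Topology Asymptotics

theorem ContDiffOn.isBigO_pow_of_iteratedDerivWithin_eq_zero {E : Type*} [NormedAddCommGroup E]
    [NormedSpace ℝ E] {f : ℝ → E} {s : Set ℝ} {x₀ : ℝ} {n : ℕ} (hs : Convex ℝ s) (hx₀ : x₀ ∈ s)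
    (hf : ContDiffOn ℝ (n + 1 : ℕ) f s) (h : ∀ i ≤ n, iteratedDerivWithin i f s x₀ = 0) :
    f =O[𝓝[s] x₀] fun x => (x - x₀) ^ (n + 1) := by
  have htaylor : taylorWithinEval f (n + 1) s x₀ = fun x =>
      (x - x₀) ^ (n + 1) • (((n + 1).factorial : ℝ)⁻¹ • iteratedDerivWithin (n + 1) f s x₀) := by
    funext x
    rw [taylor_within_apply, Finset.sum_range_succ,
      Finset.sum_eq_zero fun i hi => by rw [h i (Finset.mem_range_succ_iff.1 hi), smul_zero],
      zero_add, smul_smul, mul_comm]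
  have hpoly : taylorWithinEval f (n + 1) s x₀ =O[𝓝[s] x₀] fun x => (x - x₀) ^ (n + 1) := by
    rw [htaylor]
    exact isBigO_of_le' _ fun x => (norm_smul _ _).trans_le (mul_comm _ _).le
  simpa using (taylor_isLittleO hs hx₀ hf).isBigO.add hpoly

theorem iteratedDeriv_rpow_const_zero {p : ℝ} {k : ℕ} (hk : (k : ℝ) < p) :
    iteratedDeriv k (fun y : ℝ => y ^ p) 0 = 0 := by
  rw [iteratedDeriv_eq_iterate, Real.iter_deriv_rpow_const, Real.zero_rpow (sub_pos.2 hk).ne',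
    mul_zero]

theorem iteratedDeriv_comp_const_sub_mul {𝕜 : Type*} [NontriviallyNormedField 𝕜] {n : ℕ}
    {F : 𝕜 → 𝕜} (hF : ContDiff 𝕜 n F) (a c x : 𝕜) :
    iteratedDeriv n (fun x => F (a - c * x)) x = (-c) ^ n * iteratedDeriv n F (a - c * x) := by
  rw [iteratedDeriv_comp_const_mul (f := fun y => F (a - y))
      (hF.comp (contDiff_const.sub contDiff_id)), iteratedDeriv_comp_const_sub]
  simp only [smul_eq_mul]
  ring

theorem isLittleO_rpow_nhdsGT_zero_of_lt {a b : ℝ} (hab : a < b) :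
    (fun t : ℝ => t ^ b) =o[𝓝[>] 0] fun t => t ^ a := by
  have hlim : Tendsto (fun t : ℝ => t ^ (b - a)) (𝓝[>] 0) (𝓝 0) := by
    have := (Real.continuousAt_rpow_const 0 (b - a) (Or.inr (sub_pos.2 hab).le)).tendsto
    rw [Real.zero_rpow (sub_pos.2 hab).ne'] at this
    exact this.mono_left nhdsWithin_le_nhds
  refine ((isLittleO_one_iff ℝ).2 hlim |>.mul_isBigO (isBigO_refl (fun t : ℝ => t ^ a) _)).congr'
    ?_ (by simp)
  filter_upwards [self_mem_nhdsWithin] with t (ht : 0 < t)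
  rw [← Real.rpow_add ht, sub_add_cancel]

noncomputable def endpointPow (r : ℕ) (lam x : ℝ) : ℝ := (1 - lam * x) ^ ((r : ℝ) + 1 / 2)

theorem contDiff_endpointPow (r : ℕ) (lam : ℝ) : ContDiff ℝ r (endpointPow r lam) :=
  (Real.contDiff_rpow_const_of_le (by linarith)).comp (by fun_prop)

theorem iteratedDeriv_endpointPow_eq_zero {r i : ℕ} (hi : i ≤ r) {lam x : ℝ} (hx : lam * x = 1) :
    iteratedDeriv i (endpointPow r lam) x = 0 := by
  have hir : (i : ℝ) ≤ r := by exact_mod_cast hi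
  have := iteratedDeriv_comp_const_sub_mul (n := i) (F := fun y : ℝ => y ^ ((r : ℝ) + 1 / 2))
    (Real.contDiff_rpow_const_of_le (by linarith)) 1 lam x
  rwa [hx, sub_self, iteratedDeriv_rpow_const_zero (by linarith), mul_zero] at this

theorem iteratedDerivWithin_endpointPow_eq_zero {r i : ℕ} (hi : i ≤ r) {lam : ℝ}
    (hlam : lam = -1 ∨ lam = 1) :
    iteratedDerivWithin i (endpointPow r lam) (Icc (-1) 1) lam = 0 := by
  rw [iteratedDerivWithin_eq_iteratedDeriv (uniqueDiffOn_Icc (by norm_num))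
      ((contDiff_endpointPow r lam).contDiffAt.of_le (by exact_mod_cast hi))
      (by rcases hlam with rfl | rfl <;> norm_num),
    iteratedDeriv_endpointPow_eq_zero hi (by rcases hlam with rfl | rfl <;> norm_num)]

theorem endpointPow_sub_mul {r : ℕ} {lam : ℝ} (hlam : lam = -1 ∨ lam = 1) (t : ℝ) :
    endpointPow r lam (lam - lam * t) = t ^ ((r : ℝ) + 1 / 2) := by
  rcases hlam with rfl | rfl <;> simp [endpointPow]

theorem tendsto_sub_mul_nhdsGT_zero {lam : ℝ} (hlam : lam = -1 ∨ lam = 1) :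
    Tendsto (fun t => lam - lam * t) (𝓝[>] 0) (𝓝[Icc (-1) 1] lam) := by
  refine tendsto_nhdsWithin_iff.2 ⟨?_, ?_⟩
  · exact ((continuous_const.sub (continuous_const.mul continuous_id)).tendsto' 0 lam
      (by simp)).mono_left nhdsWithin_le_nhds
  · filter_upwards [Ioo_mem_nhdsGT (by norm_num : (0 : ℝ) < 2)] with t ⟨ht0, ht2⟩
    rcases hlam with rfl | rfl <;> constructor <;> linarith

theorem not_isBigO_of_endpointPow_le {r : ℕ} {lam : ℝ} (hlam : lam = -1 ∨ lam = 1) {g : ℝ → ℝ}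
    (hle : ∀ᶠ x in 𝓝[Icc (-1) 1] lam, endpointPow r lam x ≤ g x) :
    ¬ g =O[𝓝[Icc (-1) 1] lam] fun x => (x - lam) ^ (r + 1) := by
  intro hg
  -- along `x = λ - λt`, `t → 0⁺`, the function `endpointPow r λ` is exactly `t ^ (r + 1/2)`
  have hφ := tendsto_sub_mul_nhdsGT_zero hlam
  have hlower : (fun t : ℝ => t ^ ((r : ℝ) + 1 / 2)) =O[𝓝[>] 0] fun t => g (lam - lam * t) := by
    refine IsBigO.of_bound' ?_
    filter_upwards [hφ.eventually hle, self_mem_nhdsWithin] with t ht (ht0 : 0 < t)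
    rw [endpointPow_sub_mul hlam] at ht
    rw [Real.norm_of_nonneg (Real.rpow_nonneg ht0.le _), Real.norm_eq_abs]
    exact ht.trans (le_abs_self _)
  have hupper : (fun t => g (lam - lam * t)) =O[𝓝[>] 0] fun t : ℝ => t ^ (r + 1) := by
    refine (hg.comp_tendsto hφ).trans (isBigO_of_le _ fun t => ?_)
    rcases hlam with rfl | rfl <;> simp
  have hsmall : (fun t : ℝ => t ^ (r + 1)) =o[𝓝[>] 0] fun t : ℝ => t ^ ((r : ℝ) + 1 / 2) := by
    refine (isLittleO_rpow_nhdsGT_zero_of_lt (b := ((r + 1 : ℕ) : ℝ)) ?_).congr_left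
      fun t => Real.rpow_natCast t (r + 1)
    push_cast
    linarith
  refine isLittleO_irrefl (Eventually.frequently ?_) ((hlower.trans hupper).trans_isLittleO hsmall)
  filter_upwards [self_mem_nhdsWithin] with t (ht0 : 0 < t)
  exact (Real.rpow_pos_of_pos ht0 _).ne'

/-- Local onesided approximation with interpolatory constraints, negative result at an
endpoint: for `r ∈ ℕ₀` and `λ ∈ {-1, 1}`, there is `f ∈ C^r[-1,1]` such that no
`g ∈ C^{r+1}[-1,1]` satisfies both `g^{(i)}(λ) = f^{(i)}(λ)` for `0 ≤ i ≤ r` and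
`g ≥ f` on `(λ-ε, λ+ε) ∩ [-1,1]` for some `ε > 0`. -/
theorem statement6 (r : ℕ) (lam : ℝ) (hlam : lam = -1 ∨ lam = 1) :
    ∃ f : ℝ → ℝ, ContDiffOn ℝ r f (Set.Icc (-1 : ℝ) 1) ∧
      ¬ ∃ g : ℝ → ℝ, ContDiffOn ℝ (r + 1 : ℕ) g (Set.Icc (-1 : ℝ) 1) ∧
        (∀ i : ℕ, i ≤ r →
          iteratedDerivWithin i g (Set.Icc (-1 : ℝ) 1) lam
            = iteratedDerivWithin i f (Set.Icc (-1 : ℝ) 1) lam) ∧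
        (∃ ε : ℝ, 0 < ε ∧
          ∀ x ∈ Set.Ioo (lam - ε) (lam + ε) ∩ Set.Icc (-1 : ℝ) 1, f x ≤ g x) := by
  refine ⟨endpointPow r lam, (contDiff_endpointPow r lam).contDiffOn, ?_⟩
  rintro ⟨g, hg, hderiv, ε, hε, hle⟩
  have hlamI : lam ∈ Icc (-1 : ℝ) 1 := by rcases hlam with rfl | rfl <;> norm_num
  have hgO : g =O[𝓝[Icc (-1) 1] lam] fun x => (x - lam) ^ (r + 1) :=
    hg.isBigO_pow_of_iteratedDerivWithin_eq_zero (convex_Icc _ _) hlamI fun i hi =>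
      (hderiv i hi).trans (iteratedDerivWithin_endpointPow_eq_zero hi hlam)
  exact not_isBigO_of_endpointPow_le hlam
    (mem_nhdsWithin.2 ⟨_, isOpen_Ioo, ⟨by linarith, by linarith⟩, hle⟩) hgO
end

section
/- Let r ∈ ℕ and let λ ∈ (-1,1). Set r̂ := 2⌈r/2⌉ - 1 (so r̂ = r if r is odd and r̂ = r-1 if r is even). Then there exists a function f ∈ C^r with f ≡ 0 on [-1, λ] such that there is NO function g ∈ C^{r+1} satisfying all of: (a) g^(i)(λ) = f^(i)(λ) for all 0 ≤ i ≤ r̂; (b) g(x) ≤ f(x) for all x ∈ (λ-ε, λ]; and (c) g(x) ≥ f(x) for all x ∈ [λ, λ+ε), for some ε > 0. That is, intertwining approximation by C^{r+1}-smooth functions with Hermite interpolation of order r̂ at the sign-change point is impossible in general. -/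
/-!
Take `f x = (x - λ)₊ ^ (r + 1/2)`. It is `C^r` and vanishes to order `r` at `λ`, so the
interpolation conditions give `g⁽ⁱ⁾(λ) = 0` for `i < r`, and Taylor's theorem of order `r + 1`
gives `g x = c (x - λ)^r + O((x - λ)^(r+1))` with `c = g⁽ʳ⁾(λ) / r!`. For odd `r` the
interpolation conditions reach order `r`, so `c = 0`; for even `r`, `(x - λ)^r > 0` on both
sides and `g ≤ f = 0` left of `λ` forces `c ≤ 0`. Either way `g (λ + t) = O(t^(r+1))` as
`t → 0⁺`, which is incompatible with `g ≥ f = t^(r + 1/2)` right of `λ`.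
-/
open Set Filter Topology Asymptotics

noncomputable def truncatedRpow (α x : ℝ) : ℝ := max x 0 ^ α

section truncatedRpow

variable {α x : ℝ}

lemma truncatedRpow_of_nonpos (hα : α ≠ 0) (hx : x ≤ 0) : truncatedRpow α x = 0 := by
  simp [truncatedRpow, max_eq_right hx, Real.zero_rpow hα]

lemma truncatedRpow_of_nonneg (hx : 0 ≤ x) : truncatedRpow α x = x ^ α := by
  simp [truncatedRpow, max_eq_left hx]

lemma continuous_truncatedRpow (hα : 0 < α) : Continuous (truncatedRpow α) :=
  (continuous_id.max continuous_const).rpow_const fun _ => Or.inr hα.le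

lemma hasDerivAt_truncatedRpow (hα : 1 < α) (x : ℝ) :
    HasDerivAt (truncatedRpow α) (α * truncatedRpow (α - 1) x) x := by
  have hα0 : α ≠ 0 := by positivity
  have hα1 : α - 1 ≠ 0 := by linarith
  have left : ∀ {y}, y ≤ 0 → HasDerivWithinAt (truncatedRpow α) (α * truncatedRpow (α - 1) y)
      (Iic 0) y := fun {y} hy => by
    rw [truncatedRpow_of_nonpos hα1 hy, mul_zero]
    exact (hasDerivWithinAt_const y _ 0).congr (fun z hz => truncatedRpow_of_nonpos hα0 hz)
      (truncatedRpow_of_nonpos hα0 hy)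
  have right : ∀ {y}, 0 ≤ y → HasDerivWithinAt (truncatedRpow α)
      (α * truncatedRpow (α - 1) y) (Ici 0) y := fun {y} hy => by
    rw [truncatedRpow_of_nonneg hy]
    exact (Real.hasDerivAt_rpow_const (Or.inr hα.le)).hasDerivWithinAt.congr
      (fun z hz => truncatedRpow_of_nonneg hz) (truncatedRpow_of_nonneg hy)
  rcases lt_trichotomy x 0 with hx | rfl | hx
  · exact (left hx.le).hasDerivAt (Iic_mem_nhds hx)
  · simpa using (left le_rfl).union (right le_rfl)
  · exact (right hx.le).hasDerivAt (Ici_mem_nhds hx)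

lemma contDiff_truncatedRpow {n : ℕ} (hn : n < α) : ContDiff ℝ n (truncatedRpow α) := by
  induction n generalizing α with
  | zero => exact contDiff_zero.2 (continuous_truncatedRpow (by simpa using hn))
  | succ n ih =>
    push_cast at hn
    have hα : 1 < α := by linarith [(n.cast_nonneg : (0 : ℝ) ≤ n)]
    rw [Nat.cast_succ, contDiff_succ_iff_deriv]
    refine ⟨fun x => (hasDerivAt_truncatedRpow hα x).differentiableAt, by simp, ?_⟩
    rw [show deriv (truncatedRpow α) = fun x => α * truncatedRpow (α - 1) x from
      funext fun x => (hasDerivAt_truncatedRpow hα x).deriv]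
    exact contDiff_const.mul (ih (by linarith))

end truncatedRpow

lemma iteratedDerivWithin_eq_zero_of_forall_le_eq_zero {f : ℝ → ℝ} {s : Set ℝ} {n i : ℕ}
    {a : ℝ} (hs : UniqueDiffOn ℝ s) (ha : a ∈ s) (hf : ContDiff ℝ n f) (hi : i ≤ n)
    (h : ∀ x ≤ a, f x = 0) : iteratedDerivWithin i f s a = 0 := by
  have hIio : EqOn (iteratedDeriv i f) 0 (Iio a) := fun x hx => by
    have hf0 : f =ᶠ[𝓝 x] 0 := eventually_of_mem (Iio_mem_nhds hx) fun y hy => h y (le_of_lt hy)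
    simpa using hf0.iteratedDeriv_eq i
  have hcont := hf.continuous_iteratedDeriv i (by exact_mod_cast hi)
  rw [iteratedDerivWithin_eq_iteratedDeriv hs (hf.of_le (by exact_mod_cast hi)).contDiffAt ha]
  simpa using hIio.closure hcont continuous_const (by simp : a ∈ closure (Iio a))

lemma taylor_isBigO_of_iteratedDerivWithin_eq_zero {g : ℝ → ℝ} {s : Set ℝ} {x₀ : ℝ} {n : ℕ}
    (hs : Convex ℝ s) (hx₀ : x₀ ∈ s) (hg : ContDiffOn ℝ (n + 1 : ℕ) g s)
    (hvanish : ∀ i < n, iteratedDerivWithin i g s x₀ = 0) :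
    (fun x => g x - iteratedDerivWithin n g s x₀ / n.factorial * (x - x₀) ^ n)
      =O[𝓝[s] x₀] fun x => (x - x₀) ^ (n + 1) := by
  have htaylor : ∀ x, taylorWithinEval g (n + 1) s x₀ x =
      iteratedDerivWithin n g s x₀ / n.factorial * (x - x₀) ^ n +
        iteratedDerivWithin (n + 1) g s x₀ / (n + 1).factorial * (x - x₀) ^ (n + 1) := by
    intro x
    rw [taylor_within_apply, Finset.sum_range_succ, Finset.sum_range_succ,
      Finset.sum_eq_zero fun i hi => by simp [hvanish i (Finset.mem_range.1 hi)]]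
    simp only [smul_eq_mul]
    ring
  have hrem := (taylor_isLittleO hs hx₀ hg).isBigO
  refine (hrem.add ((isBigO_refl _ _).const_mul_left
    (iteratedDerivWithin (n + 1) g s x₀ / (n + 1).factorial))).congr_left fun x => ?_
  rw [htaylor]
  ring

lemma isLittleO_pow_rpow_nhdsGT {x₀ α : ℝ} {n : ℕ} (h : α < n) :
    (fun x => (x - x₀) ^ n) =o[𝓝[>] x₀] fun x => (x - x₀) ^ α := by
  have hlim : Tendsto (fun x => (x - x₀) ^ ((n : ℝ) - α)) (𝓝[>] x₀) (𝓝 0) := by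
    have := ((Real.continuousAt_rpow_const 0 ((n : ℝ) - α) (Or.inr (by linarith))).tendsto.comp
      (tendsto_sub_nhds_zero_iff.2 (tendsto_id (x := 𝓝 x₀)))).mono_left
      (nhdsWithin_le_nhds (s := Ioi x₀))
    simpa [Function.comp_def, Real.zero_rpow (by linarith : (n : ℝ) - α ≠ 0)] using this
  refine (((isLittleO_one_iff ℝ).2 hlim).mul_isBigO
    (isBigO_refl (fun x => (x - x₀) ^ α) _)).congr' ?_ (by simp)
  filter_upwards [self_mem_nhdsWithin] with x hx
  rw [← Real.rpow_add (sub_pos.2 hx), sub_add_cancel, Real.rpow_natCast]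

lemma not_eventually_rpow_le_of_isBigO {g : ℝ → ℝ} {x₀ c α : ℝ} {n : ℕ} (hα : α < n + 1)
    (hc : c ≤ 0) (hg : (fun x => g x - c * (x - x₀) ^ n) =O[𝓝 x₀] fun x => (x - x₀) ^ (n + 1)) :
    ¬ ∀ᶠ x in 𝓝[>] x₀, (x - x₀) ^ α ≤ g x := by
  intro hle
  have hlower : (fun x => (x - x₀) ^ α) =O[𝓝[>] x₀] fun x => g x - c * (x - x₀) ^ n := by
    refine IsBigO.of_bound' ?_
    filter_upwards [hle, self_mem_nhdsWithin] with x hx hx₀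
    have hpos : 0 ≤ (x - x₀) ^ n := pow_nonneg (sub_nonneg.2 (le_of_lt hx₀)) n
    rw [Real.norm_of_nonneg (Real.rpow_nonneg (sub_nonneg.2 (le_of_lt hx₀)) _)]
    exact hx.trans (by nlinarith [Real.le_norm_self (g x - c * (x - x₀) ^ n)])
  refine isLittleO_irrefl' ?_ ((hlower.trans (hg.mono nhdsWithin_le_nhds)).trans_isLittleO
    (isLittleO_pow_rpow_nhdsGT (by exact_mod_cast hα)))
  refine Eventually.frequently ?_
  filter_upwards [self_mem_nhdsWithin] with x hx
  exact norm_ne_zero_iff.2 (Real.rpow_pos_of_pos (sub_pos.2 hx) α).ne'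

lemma nonpos_of_eventually_nonpos_nhdsLT {g : ℝ → ℝ} {x₀ c : ℝ} {n : ℕ} (hn : Even n)
    (hg : (fun x => g x - c * (x - x₀) ^ n) =O[𝓝 x₀] fun x => (x - x₀) ^ (n + 1))
    (hle : ∀ᶠ x in 𝓝[<] x₀, g x ≤ 0) : c ≤ 0 := by
  by_contra! hc
  have hlower : (fun x => (x - x₀) ^ n) =O[𝓝[<] x₀] fun x => g x - c * (x - x₀) ^ n := by
    refine IsBigO.of_bound c⁻¹ ?_
    filter_upwards [hle] with x hx
    rw [Real.norm_of_nonneg (hn.pow_nonneg _), Real.norm_eq_abs, abs_sub_comm,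
      inv_mul_eq_div, le_div_iff₀ hc]
    exact (by linarith : c * (x - x₀) ^ n - g x ≥ (x - x₀) ^ n * c).le.trans (le_abs_self _)
  have hpow : (fun x => (x - x₀) ^ (n + 1)) =o[𝓝 x₀] fun x => (x - x₀) ^ n :=
    (isLittleO_pow_pow (𝕜 := ℝ) (lt_add_one n)).comp_tendsto
      (tendsto_sub_nhds_zero_iff.2 tendsto_id)
  refine isLittleO_irrefl' ?_ ((hlower.trans (hg.mono nhdsWithin_le_nhds)).trans_isLittleO
    (hpow.mono nhdsWithin_le_nhds))
  refine Eventually.frequently ?_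
  filter_upwards [self_mem_nhdsWithin] with x hx
  exact norm_ne_zero_iff.2 (pow_ne_zero _ (sub_neg.2 hx).ne)

theorem statement7_general (r : ℕ) (lam : ℝ) (hlam : lam ∈ Set.Ioo (-1 : ℝ) 1) :
    ∃ f : ℝ → ℝ, ContDiffOn ℝ r f (Set.Icc (-1 : ℝ) 1) ∧
      (∀ x ∈ Set.Icc (-1 : ℝ) lam, f x = 0) ∧
      ¬ ∃ g : ℝ → ℝ, ContDiffOn ℝ (r + 1 : ℕ) g (Set.Icc (-1 : ℝ) 1) ∧
        (∀ i : ℕ, i ≤ 2 * ((r + 1) / 2) - 1 →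
          iteratedDerivWithin i g (Set.Icc (-1 : ℝ) 1) lam
            = iteratedDerivWithin i f (Set.Icc (-1 : ℝ) 1) lam) ∧
        (∃ ε : ℝ, 0 < ε ∧
          (∀ x ∈ Set.Ioc (lam - ε) lam ∩ Set.Icc (-1 : ℝ) 1, g x ≤ f x) ∧
          (∀ x ∈ Set.Ico lam (lam + ε) ∩ Set.Icc (-1 : ℝ) 1, f x ≤ g x)) := by
  have hs : Icc (-1 : ℝ) 1 ∈ 𝓝 lam := Icc_mem_nhds hlam.1 hlam.2
  set α : ℝ := r + 1 / 2
  set f : ℝ → ℝ := fun x => truncatedRpow α (x - lam)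
  have hf : ContDiff ℝ r f :=
    (contDiff_truncatedRpow (by simp [α])).comp (contDiff_id.sub contDiff_const)
  have hf_zero : ∀ x ≤ lam, f x = 0 := fun x hx =>
    truncatedRpow_of_nonpos (by positivity) (sub_nonpos.2 hx)
  have hf_deriv : ∀ i ≤ r, iteratedDerivWithin i f (Icc (-1) 1) lam = 0 := fun i hi =>
    iteratedDerivWithin_eq_zero_of_forall_le_eq_zero (uniqueDiffOn_Icc (by norm_num))
      (mem_of_mem_nhds hs) hf hi hf_zero
  refine ⟨f, hf.contDiffOn, fun x hx => hf_zero x hx.2, ?_⟩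
  rintro ⟨g, hg, hinterp, ε, hε, hleft, hright⟩
  have hg_deriv : ∀ i < r, iteratedDerivWithin i g (Icc (-1) 1) lam = 0 := fun i hi => by
    rw [hinterp i (by omega), hf_deriv i hi.le]
  have htaylor := taylor_isBigO_of_iteratedDerivWithin_eq_zero (convex_Icc _ _)
    (mem_of_mem_nhds hs) hg hg_deriv
  rw [nhdsWithin_eq_nhds.2 hs] at htaylor
  have hnear : ∀ᶠ x in 𝓝 lam, x ∈ Ioo (lam - ε) (lam + ε) ∩ Icc (-1) 1 :=
    inter_mem (Ioo_mem_nhds (by linarith) (by linarith)) hs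
  have hcoeff : iteratedDerivWithin r g (Icc (-1) 1) lam / r.factorial ≤ 0 := by
    rcases Nat.even_or_odd r with heven | ⟨k, rfl⟩
    · refine nonpos_of_eventually_nonpos_nhdsLT heven htaylor ?_
      filter_upwards [nhdsWithin_le_nhds hnear, self_mem_nhdsWithin] with x ⟨hxε, hx⟩ hxlam
      exact hf_zero x (le_of_lt hxlam) ▸ hleft x ⟨⟨hxε.1, le_of_lt hxlam⟩, hx⟩
    · rw [hinterp _ (by omega), hf_deriv _ le_rfl, zero_div]
  refine not_eventually_rpow_le_of_isBigO (α := α) (by push_cast [α]; linarith) hcoeff htaylor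
    ?_
  filter_upwards [nhdsWithin_le_nhds hnear, self_mem_nhdsWithin] with x ⟨hxε, hx⟩ hxlam
  rw [← truncatedRpow_of_nonneg (sub_nonneg.2 (le_of_lt hxlam))]
  exact hright x ⟨⟨le_of_lt hxlam, hxε.2⟩, hx⟩

/-- Local intertwining approximation with interpolation at a sign-change point, negative
result: for `r ∈ ℕ`, `λ ∈ (-1,1)` and `r̂ := 2⌈r/2⌉ - 1`, there is `f ∈ C^r[-1,1]`
vanishing on `[-1,λ]` such that no `g ∈ C^{r+1}[-1,1]` satisfies all of
`g^{(i)}(λ) = f^{(i)}(λ)` for `0 ≤ i ≤ r̂`, `g ≤ f` on `(λ-ε, λ] ∩ [-1,1]` and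
`g ≥ f` on `[λ, λ+ε) ∩ [-1,1]` for some `ε > 0`. -/
theorem statement7 (r : ℕ) (hr : 1 ≤ r) (lam : ℝ) (hlam : lam ∈ Set.Ioo (-1 : ℝ) 1) :
    ∃ f : ℝ → ℝ, ContDiffOn ℝ r f (Set.Icc (-1 : ℝ) 1) ∧
      (∀ x ∈ Set.Icc (-1 : ℝ) lam, f x = 0) ∧
      ¬ ∃ g : ℝ → ℝ, ContDiffOn ℝ (r + 1 : ℕ) g (Set.Icc (-1 : ℝ) 1) ∧
        (∀ i : ℕ, i ≤ 2 * ((r + 1) / 2) - 1 →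
          iteratedDerivWithin i g (Set.Icc (-1 : ℝ) 1) lam
            = iteratedDerivWithin i f (Set.Icc (-1 : ℝ) 1) lam) ∧
        (∃ ε : ℝ, 0 < ε ∧
          (∀ x ∈ Set.Ioc (lam - ε) lam ∩ Set.Icc (-1 : ℝ) 1, g x ≤ f x) ∧
          (∀ x ∈ Set.Ico lam (lam + ε) ∩ Set.Icc (-1 : ℝ) 1, f x ≤ g x)) :=
  statement7_general r lam hlam
end

section
/- For any n ∈ ℕ, any A > 0 and any λ ∈ I, there exists a continuous function f on I with f ≥ 0 on I such that, for every polynomial P_n of degree ≤ n which is nonnegative on I and satisfies P_n(λ) = f(λ), one has ‖f - P_n‖ > A ω₃(f, 1). Hence the error of positive polynomial approximation with interpolation at λ cannot be bounded by a constant multiple of the third modulus of smoothness ω₃(f, 1). -/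
/-!
Take `f = max q 0` for the parabola `q x = K (x - λ)² + σ (x - λ)`, where `σ = ±1` is chosen so
that `[-1, 1]` extends from `λ` in the direction `-σ`. Since `f - q` takes values in
`[0, 1/(4K)]` and third differences annihilate `q`, `ω₃(f, 1) ≤ 2/K`.

A polynomial `P ≥ 0` on `[-1, 1]` with `P λ = f λ = 0` has its minimum at `λ`, so
`σ P'(λ) ≤ 0`, while `q'(λ) = σ`; hence `|q'(λ) - P'(λ)| ≥ 1`. For `K` large, `f = q` at a fixed
set of `max n 2 + 1` nodes, and differentiating the Lagrange interpolation formula at those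
nodes bounds `|q'(λ) - P'(λ)|` by `Λ ‖f - P‖`, where `Λ` depends only on the nodes and `λ`.
Thus `‖f - P‖ ≥ 1/Λ`, whereas `A ω₃(f, 1) ≤ 2A/K` is as small as we like.
-/

/-- The `k`-th modulus of smoothness of `g` with step bound `t` on `[a,b]`. -/
noncomputable def omegaK (g : ℝ → ℝ) (k : ℕ) (t a b : ℝ) : ℝ :=
  sSup {v : ℝ | ∃ h x : ℝ, 0 < h ∧ h ≤ t ∧ a ≤ x ∧ x + (k : ℝ) * h ≤ b ∧
    v = |∑ i ∈ Finset.range (k + 1),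
      (-1 : ℝ) ^ (k - i) * (k.choose i : ℝ) * g (x + (i : ℝ) * h)|}

/-- The sup norm of `g` on `[a,b]`. -/
noncomputable def supNorm (g : ℝ → ℝ) (a b : ℝ) : ℝ :=
  sSup ((fun x => |g x|) '' Set.Icc a b)

open Polynomial Finset Set Filter

theorem Polynomial.sum_range_choose_mul_eval_eq_zero {R : Type*} [CommRing R] {Q : R[X]} {k : ℕ}
    (hQ : Q.natDegree < k) (x h : R) :
    ∑ i ∈ range (k + 1), (-1 : R) ^ (k - i) * (k.choose i : R) * Q.eval (x + i * h) = 0 := by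
  have hR : (Q.comp (C x + X * C h)).natDegree < k := by
    have : (C x + X * C h).natDegree ≤ 1 := by compute_degree
    exact natDegree_comp_le.trans_lt (by nlinarith)
  simpa [fwdDiff_iter_eq_sum_shift, mul_comm h] using
    congr_fun (fwdDiff_iter_eq_zero_of_degree_lt hR) 0

theorem omegaK_le_of_abs_sub_eval_le {g : ℝ → ℝ} {Q : ℝ[X]} {k : ℕ} {B : ℝ}
    (hQ : Q.natDegree < k) (hB : ∀ x, |g x - Q.eval x| ≤ B) (t a b : ℝ) :
    omegaK g k t a b ≤ 2 ^ k * B := by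
  refine Real.sSup_le ?_ (by have := (abs_nonneg _).trans (hB 0); positivity)
  rintro _ ⟨h, x, -, -, -, -, rfl⟩
  calc _ = |∑ i ∈ range (k + 1),
          (-1 : ℝ) ^ (k - i) * (k.choose i : ℝ) * (g (x + i * h) - Q.eval (x + i * h))| := by
        simp only [mul_sub, sum_sub_distrib, Q.sum_range_choose_mul_eval_eq_zero hQ, sub_zero]
    _ ≤ ∑ i ∈ range (k + 1), (k.choose i : ℝ) * B := by
        refine (abs_sum_le_sum_abs _ _).trans (sum_le_sum fun i _ => ?_)
        simp only [abs_mul, abs_pow, abs_neg, abs_one, one_pow, one_mul, Nat.abs_cast]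
        exact mul_le_mul_of_nonneg_left (hB _) (Nat.cast_nonneg _)
    _ = 2 ^ k * B := by rw [← sum_mul, ← Nat.cast_sum, Nat.sum_range_choose]; push_cast; rfl

theorem abs_le_supNorm {g : ℝ → ℝ} {a b x : ℝ} (hg : ContinuousOn g (Icc a b)) (hx : x ∈ Icc a b) :
    |g x| ≤ supNorm g a b :=
  le_csSup (isCompact_Icc.bddAbove_image hg.abs) ⟨x, hx, rfl⟩

theorem Lagrange.eval_derivative_eq_sum {F : Type*} [Field F] [DecidableEq F] {s : Finset F}
    {p : F[X]} (hp : p.degree < #s) (y : F) :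
    p.derivative.eval y = ∑ x ∈ s, p.eval x * (Lagrange.basis s id x).derivative.eval y := by
  conv_lhs => rw [Lagrange.eq_interpolate (injOn_id _) hp, Lagrange.interpolate_apply]
  simp [eval_finsetSum]

theorem Lagrange.abs_eval_derivative_sub_le {s : Finset ℝ} {p r : ℝ[X]} (hp : p.degree < #s)
    (hr : r.degree < #s) {S : ℝ} (hS : ∀ x ∈ s, |p.eval x - r.eval x| ≤ S) (y : ℝ) :
    |p.derivative.eval y - r.derivative.eval y| ≤
      S * ∑ x ∈ s, |(Lagrange.basis s id x).derivative.eval y| := by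
  have hpr : (p - r).degree < #s := (degree_sub_le p r).trans_lt (max_lt hp hr)
  rw [← eval_sub, ← derivative_sub, eval_derivative_eq_sum hpr, mul_sum]
  refine (abs_sum_le_sum_abs _ _).trans (sum_le_sum fun x hx => ?_)
  rw [abs_mul, eval_sub]
  exact mul_le_mul_of_nonneg_right (hS x hx) (abs_nonneg _)

theorem abs_eval_derivative_sub_le_supNorm {s : Finset ℝ} {a b : ℝ} (hs : ↑s ⊆ Icc a b)
    {f : ℝ → ℝ} (hf : ContinuousOn f (Icc a b)) {Q P : ℝ[X]} (hQ : Q.natDegree < #s)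
    (hP : P.natDegree < #s) (hfQ : ∀ x ∈ s, f x = Q.eval x) (y : ℝ) :
    |Q.derivative.eval y - P.derivative.eval y| ≤
      supNorm (fun x => f x - P.eval x) a b *
        ∑ x ∈ s, |(Lagrange.basis s id x).derivative.eval y| := by
  refine Lagrange.abs_eval_derivative_sub_le (degree_le_natDegree.trans_lt (mod_cast hQ))
    (degree_le_natDegree.trans_lt (mod_cast hP)) (fun x hx => ?_) y
  rw [← hfQ x hx]
  exact abs_le_supNorm (g := fun x => f x - P.eval x) (hf.sub P.continuousOn) (hs hx)

theorem IsLocalMinOn.sub_mul_nonneg_of_hasDerivWithinAt {f : ℝ → ℝ} {s : Set ℝ} {a y f' : ℝ}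
    (h : IsLocalMinOn f s a) (hf : HasDerivWithinAt f f' s a) (hy : segment ℝ a y ⊆ s) :
    0 ≤ (y - a) * f' := by
  simpa [mul_comm] using
    h.hasFDerivWithinAt_nonneg hf.hasFDerivWithinAt (sub_mem_posTangentConeAt_of_segment_subset hy)

theorem one_le_abs_sub_of_isMinOn_Icc {g : ℝ → ℝ} {a d : ℝ} (ha : a ∈ Icc (-1 : ℝ) 1)
    (hmin : IsMinOn g (Icc (-1) 1) a) (hg : HasDerivAt g d a) :
    1 ≤ |(if 0 ≤ a then 1 else -1) - d| := by
  have key (y : ℝ) (hy : y ∈ Icc (-1 : ℝ) 1) : 0 ≤ (y - a) * d :=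
    hmin.localize.sub_mul_nonneg_of_hasDerivWithinAt hg.hasDerivWithinAt
      ((convex_Icc _ _).segment_subset ha hy)
  split_ifs with h
  · have := key (-1) (by norm_num)
    rw [abs_of_nonneg] <;> nlinarith
  · have := key 1 (by norm_num)
    rw [abs_of_neg] <;> nlinarith

noncomputable def parabola (K σ c : ℝ) : ℝ[X] := C K * (X - C c) ^ 2 + C σ * (X - C c)

section parabola

variable (K σ c : ℝ)

@[simp]
theorem eval_parabola (x : ℝ) : (parabola K σ c).eval x = K * (x - c) ^ 2 + σ * (x - c) := by
  simp [parabola]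

theorem natDegree_parabola_le : (parabola K σ c).natDegree ≤ 2 := by
  unfold parabola; compute_degree

theorem eval_derivative_parabola_self : (parabola K σ c).derivative.eval c = σ := by
  simp [parabola, derivative_pow]

variable {K σ c}

theorem eval_parabola_nonneg {x : ℝ} (hσ : |σ| ≤ 1) (hx : x = c ∨ 1 ≤ K * |x - c|) :
    0 ≤ (parabola K σ c).eval x := by
  rcases hx with rfl | hx
  · simp
  · have : -|x - c| ≤ σ * (x - c) := by
      have := abs_mul σ (x - c) ▸ neg_abs_le (σ * (x - c))
      nlinarith [abs_nonneg (x - c)]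
    rw [eval_parabola, ← sq_abs (x - c)]
    nlinarith [abs_nonneg (x - c)]

theorem omegaK_max_parabola_le (hK : 0 < K) (hσ : |σ| ≤ 1) (t a b : ℝ) :
    omegaK (fun x => max ((parabola K σ c).eval x) 0) 3 t a b ≤ 2 / K := by
  have hmax (x : ℝ) :
      |max ((parabola K σ c).eval x) 0 - (parabola K σ c).eval x| ≤ 1 / (4 * K) := by
    rw [abs_of_nonneg (sub_nonneg.2 (le_max_left _ _)), eval_parabola, le_div_iff₀ (by positivity)]
    rcases le_total (K * (x - c) ^ 2 + σ * (x - c)) 0 with h | h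
    · rw [max_eq_right h]
      nlinarith [sq_nonneg (2 * K * (x - c) + σ), sq_abs σ, abs_nonneg σ]
    · rw [max_eq_left h]; nlinarith
  calc _ ≤ 2 ^ 3 * (1 / (4 * K)) :=
        omegaK_le_of_abs_sub_eval_le ((natDegree_parabola_le K σ c).trans_lt (by norm_num))
          hmax t a b
    _ = 2 / K := by field_simp; norm_num

end parabola

theorem Finset.eventually_forall_eq_or_one_le_mul_abs_sub (s : Finset ℝ) (c : ℝ) :
    ∀ᶠ K in atTop, ∀ x ∈ s, x = c ∨ 1 ≤ K * |x - c| := by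
  refine (eventually_all_finset s).2 fun x _ => ?_
  rcases eq_or_ne x c with hx | hx
  · exact Eventually.of_forall fun _ => Or.inl hx
  · filter_upwards [eventually_ge_atTop |x - c|⁻¹] with K hK
    exact Or.inr ((inv_mul_cancel₀ (abs_pos.2 (sub_ne_zero.2 hx)).ne').symm.le.trans
      (mul_le_mul_of_nonneg_right hK (abs_nonneg _)))

theorem statement8_general (n : ℕ) (A : ℝ) (hA : 0 < A)
    (lam : ℝ) (hlam : lam ∈ Set.Icc (-1 : ℝ) 1) :
    ∃ f : ℝ → ℝ, ContinuousOn f (Set.Icc (-1 : ℝ) 1) ∧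
      (∀ x ∈ Set.Icc (-1 : ℝ) 1, 0 ≤ f x) ∧
      ∀ P : Polynomial ℝ, P.natDegree ≤ n →
        (∀ x ∈ Set.Icc (-1 : ℝ) 1, 0 ≤ P.eval x) →
        P.eval lam = f lam →
        A * omegaK f 3 1 (-1) 1 < supNorm (fun x => f x - P.eval x) (-1) 1 := by
  obtain ⟨s, hsI, hs⟩ := (Icc_infinite (by norm_num : (-1 : ℝ) < 1)).exists_subset_card_eq
    (max n 2 + 1)
  set Λ := ∑ x ∈ s, |(Lagrange.basis s id x).derivative.eval lam|
  obtain ⟨K, hK0, hKΛ, hKs⟩ := ((eventually_gt_atTop 0).and ((eventually_gt_atTop (2 * A * Λ)).and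
    (s.eventually_forall_eq_or_one_le_mul_abs_sub lam))).exists
  set σ : ℝ := if 0 ≤ lam then 1 else -1
  have hσ : |σ| ≤ 1 := by unfold σ; split_ifs <;> norm_num
  set Q := parabola K σ lam
  have hf : Continuous fun x => max (Q.eval x) 0 := by fun_prop
  refine ⟨_, hf.continuousOn, fun x _ => le_max_right _ _, fun P hP hPpos hPlam => ?_⟩
  set S := supNorm (fun x => max (Q.eval x) 0 - P.eval x) (-1) 1
  have hslope : 1 ≤ |σ - P.derivative.eval lam| :=
    one_le_abs_sub_of_isMinOn_Icc hlam
      (fun x hx => by simpa [hPlam, Q] using hPpos x hx) (P.hasDerivAt lam)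
  have hSΛ : 1 ≤ S * Λ := by
    refine hslope.trans ?_
    rw [← eval_derivative_parabola_self K σ lam]
    exact abs_eval_derivative_sub_le_supNorm hsI hf.continuousOn
      ((natDegree_parabola_le K σ lam).trans_lt (by omega)) (by omega)
      (fun x hx => max_eq_left (eval_parabola_nonneg hσ (hKs x hx))) lam
  have hS0 : 0 < S :=
    pos_of_mul_pos_left (one_pos.trans_le hSΛ) (sum_nonneg fun _ _ => abs_nonneg _)
  calc A * omegaK _ 3 1 (-1) 1 ≤ A * (2 / K) :=
        mul_le_mul_of_nonneg_left (omegaK_max_parabola_le hK0 hσ 1 (-1) 1) hA.le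
    _ < S := by
      rw [mul_div_assoc', div_lt_iff₀ hK0]
      nlinarith [mul_lt_mul_of_pos_left hKΛ hS0]

/-- Positive approximation with interpolatory constraints, negative result for `f ∈ C`:
for any `n ∈ ℕ`, `A > 0`, and `λ ∈ [-1,1]`, there is a nonnegative `f ∈ C[-1,1]` such
that any polynomial `P_n` of degree ≤ n, nonnegative on `[-1,1]`, with `P_n(λ) = f(λ)`,
satisfies `‖f - P_n‖ > A ω₃(f,1)`. -/
theorem statement8 (n : ℕ) (hn : 1 ≤ n) (A : ℝ) (hA : 0 < A)
    (lam : ℝ) (hlam : lam ∈ Set.Icc (-1 : ℝ) 1) :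
    ∃ f : ℝ → ℝ, ContinuousOn f (Set.Icc (-1 : ℝ) 1) ∧
      (∀ x ∈ Set.Icc (-1 : ℝ) 1, 0 ≤ f x) ∧
      ∀ P : Polynomial ℝ, P.natDegree ≤ n →
        (∀ x ∈ Set.Icc (-1 : ℝ) 1, 0 ≤ P.eval x) →
        P.eval lam = f lam →
        A * omegaK f 3 1 (-1) 1 < supNorm (fun x => f x - P.eval x) (-1) 1 :=
  statement8_general n A hA lam hlam
end
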